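/- Let X be a compact metric space, f : X → X a homeomorphism, λ ∈ (0,1), N ∈ ℕ, and φ, ψ : X → ℝ continuous functions. Assume: (P1) φ(x) + ψ(f(x)) < 2 log λ for all x ∈ X; (P2) every periodic point q of f with minimal period π > N satisfies ∑_{i=0}^{π-1} φ(f^i(q)) < π log λ and ∑_{i=0}^{π-1} ψ(f^i(q)) < π log λ; (P3) f has the periodic shadowing property; (P4) for every δ > 0 there exists a periodic point of f whose orbit is a δ-net of X; (P5) every periodic point of f has minimal period greater than N. Then there exist C ∈ ℝ and θ < 0 such that ∑_{i=0}^{n-1} φ(f^i(x)) ≤ C + nθ and ∑_{i=0}^{n-1} ψ(f^{-i}(x)) ≤ C + nθ for every x ∈ X and every n ≥ 1. -/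

import Mathlib

/-!
Let `g` be continuous with average at most `c < θ` over every periodic orbit. Close an orbit
segment `x, …, f^[n-1] x` into a periodic `δ`-pseudo-orbit by a detour of at most `m` steps along
a `δ`-dense periodic orbit of period `m`. A periodic point shadowing this loop has `g`-average at
most `c`, and uniform continuity of `g` transfers the bound to the loop up to `θ - c` per step, so
the sum along the segment is at most `n θ` plus the bounded cost of the detour. This is applied
to `φ` and `ψ` with `c = log λ` and `θ = log λ / 2`; backward sums of `ψ` are forward Birkhoff
sums starting at `f^[-(n-1)] x`.
-/

/-- `f` has the periodic shadowing property: every periodic `δ`-pseudo-orbit is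
`ε`-shadowed by a periodic point of `f`. -/
def HasPeriodicShadowing {X : Type*} [MetricSpace X] (f : X ≃ₜ X) : Prop :=
  ∀ ε > (0 : ℝ), ∃ δ > (0 : ℝ), ∀ x : ℤ → X,
    (∀ i : ℤ, dist (f (x i)) (x (i + 1)) < δ) →
    (∃ n : ℕ, 1 ≤ n ∧ ∀ i : ℤ, x (i + n) = x i) →
    ∃ z : X, (∃ m : ℕ, 1 ≤ m ∧ (⇑f)^[m] z = z) ∧
      ∀ i : ℤ, dist ((f.toEquiv ^ i) z) (x i) < ε

open Function Finset

theorem Function.Periodic.sum_range_mul {M : Type*} [AddCommMonoid M] {G : ℕ → M} {P : ℕ}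
    (hG : Periodic G P) (k : ℕ) :
    ∑ t ∈ range (k * P), G t = k • ∑ t ∈ range P, G t := by
  induction k with
  | zero => simp
  | succ k ih =>
    rw [Nat.succ_mul, sum_range_add, ih, succ_nsmul]
    congr 1
    exact sum_congr rfl fun t _ => by rw [add_comm]; exact hG.nat_mul k t

theorem Function.LeftInverse.sum_range_iterate_eq_birkhoffSum {α M : Type*} [AddCommMonoid M]
    {f f' : α → α} (h : LeftInverse f f') (g : α → M) (n : ℕ) (x : α) :
    ∑ i ∈ range n, g (f'^[i] x) = birkhoffSum f g n (f'^[n - 1] x) := by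
  rw [birkhoffSum, ← sum_range_reflect]
  refine sum_congr rfl fun k hk => ?_
  have hsplit : f'^[n - 1] x = f'^[k] (f'^[n - 1 - k] x) := by
    rw [← iterate_add_apply]; congr 1; have := mem_range.mp hk; omega
  rw [hsplit, (h.iterate k) _]

theorem Equiv.Perm.exists_pow_apply_eq_zpow_apply {α : Type*} {e : Equiv.Perm α} {m : ℕ}
    (hm : 0 < m) {y : α} (hy : (e ^ m) y = y) (k : ℤ) :
    ∃ L : ℕ, 1 ≤ L ∧ L ≤ m ∧ (e ^ L) y = (e ^ k) y := by
  have hm' : (0 : ℤ) < m := by exact_mod_cast hm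
  have h0 : 0 ≤ (k - 1) % m := Int.emod_nonneg _ hm'.ne'
  have hlt : (k - 1) % m < m := Int.emod_lt_of_pos _ hm'
  -- `L` is the representative of `k` modulo `m` in `[1, m]`.
  refine ⟨((k - 1) % m).toNat + 1, by omega, by omega, ?_⟩
  have hk : k = ((((k - 1) % m).toNat + 1 : ℕ) : ℤ) + m * ((k - 1) / m) := by
    have := Int.emod_def (k - 1) m
    push_cast [Int.toNat_of_nonneg h0]
    omega
  have hy' : (e ^ (m : ℤ)) y = y := by rwa [zpow_natCast]
  conv_rhs => rw [hk, zpow_add, zpow_mul, Equiv.Perm.mul_apply,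
    Equiv.Perm.zpow_apply_eq_self_of_apply_eq_self hy', zpow_natCast]

theorem Homeomorph.toEquiv_zpow_natCast_apply {X : Type*} [TopologicalSpace X] (f : X ≃ₜ X)
    (n : ℕ) (x : X) : (f.toEquiv ^ (n : ℤ)) x = f^[n] x := by
  rw [zpow_natCast, ← Equiv.Perm.iterate_eq_pow]
  rfl

theorem HasPeriodicShadowing.exists_shadow_of_periodic_nat {X : Type*} [MetricSpace X]
    {f : X ≃ₜ X} (hf : HasPeriodicShadowing f) {ε : ℝ} (hε : 0 < ε) :
    ∃ δ > 0, ∀ (v : ℕ → X) (P : ℕ), 0 < P → Periodic v P →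
      (∀ k, dist (f (v k)) (v (k + 1)) < δ) →
      ∃ z, (∃ m, 1 ≤ m ∧ f^[m] z = z) ∧ ∀ t : ℕ, dist (f^[t] z) (v t) < ε := by
  obtain ⟨δ, hδ, hshadow⟩ := hf ε hε
  refine ⟨δ, hδ, fun v P hP hv hpseudo => ?_⟩
  have hP' : (0 : ℤ) < P := by exact_mod_cast hP
  have hv_congr : ∀ a b : ℕ, (a : ℤ) ≡ b [ZMOD P] → v a = v b := fun a b h => by
    rw [← hv.map_mod_nat a, ← hv.map_mod_nat b, Int.natCast_modEq_iff.mp h]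
  have hres : ∀ i : ℤ, (((i % P).toNat : ℕ) : ℤ) = i % P := fun i =>
    Int.toNat_of_nonneg (Int.emod_nonneg _ hP'.ne')
  set u : ℤ → X := fun i => v (i % P).toNat
  have hu_nat : ∀ t : ℕ, u t = v t := fun t =>
    hv_congr _ _ (by rw [hres]; exact Int.mod_modEq _ _)
  have hu_pseudo : ∀ i : ℤ, dist (f (u i)) (u (i + 1)) < δ := fun i => by
    have hstep : u (i + 1) = v ((i % P).toNat + 1) := hv_congr _ _ <| by
      push_cast [hres]
      exact (Int.mod_modEq _ _).trans ((Int.mod_modEq i P).symm.add_right 1)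
    rw [hstep]
    exact hpseudo _
  have hu_per : ∀ i : ℤ, u (i + P) = u i := fun i => by simp only [u, Int.add_emod_right]
  obtain ⟨z, hz, hzu⟩ := hshadow u hu_pseudo ⟨P, hP, hu_per⟩
  refine ⟨z, hz, fun t => ?_⟩
  rw [← hu_nat, ← f.toEquiv_zpow_natCast_apply]
  exact hzu t

theorem exists_iterate_dist_lt_of_orbit_net {X : Type*} [PseudoMetricSpace X] {f : X ≃ₜ X}
    {q : X} {m : ℕ} (hm : 1 ≤ m) (hq : f^[m] q = q) {δ : ℝ}
    (hnet : ∀ x : X, ∃ i : ℤ, dist x ((f.toEquiv ^ i) q) < δ) (j : ℕ) (x : X) :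
    ∃ L : ℕ, 1 ≤ L ∧ L ≤ m ∧ dist (f^[L] (f^[j] q)) x < δ := by
  simp only [← f.toEquiv_zpow_natCast_apply, zpow_natCast] at hq ⊢
  obtain ⟨i, hi⟩ := hnet x
  have hy : (f.toEquiv ^ m) ((f.toEquiv ^ j) q) = (f.toEquiv ^ j) q := by
    rw [← Equiv.Perm.mul_apply, ← pow_mul_comm, Equiv.Perm.mul_apply, hq]
  obtain ⟨L, hL, hLm, hLy⟩ := Equiv.Perm.exists_pow_apply_eq_zpow_apply hm hy (i - j)
  refine ⟨L, hL, hLm, ?_⟩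
  rwa [hLy, ← zpow_natCast, ← Equiv.Perm.mul_apply, ← zpow_add, sub_add_cancel, dist_comm]

section OrbitLoop

variable {α : Type*} (f : α → α) (x y : α) (n L : ℕ)

/-- The `(n + L)`-periodic sequence `x, f x, …, f^[n-1] x, y, f y, …, f^[L-1] y, x, …`. -/
def orbitLoop (k : ℕ) : α :=
  if k % (n + L) < n then f^[k % (n + L)] x else f^[k % (n + L) - n] y

theorem orbitLoop_periodic : Periodic (orbitLoop f x y n L) (n + L) := fun k => by
  simp only [orbitLoop, Nat.add_mod_right]

theorem orbitLoop_of_lt {k : ℕ} (hk : k < n + L) :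
    orbitLoop f x y n L k = if k < n then f^[k] x else f^[k - n] y := by
  simp only [orbitLoop, Nat.mod_eq_of_lt hk]

theorem sum_range_orbitLoop {M : Type*} [AddCommMonoid M] (g : α → M) :
    ∑ k ∈ range (n + L), g (orbitLoop f x y n L k) =
      birkhoffSum f g n x + birkhoffSum f g L y := by
  rw [sum_range_add, birkhoffSum, birkhoffSum]
  congr 1 <;> refine sum_congr rfl fun k hk => ?_ <;> have := mem_range.mp hk
  · rw [orbitLoop_of_lt _ _ _ _ _ (by omega), if_pos this]
  · rw [orbitLoop_of_lt _ _ _ _ _ (by omega), if_neg (by omega), Nat.add_sub_cancel_left]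

variable {f x y n L}

theorem dist_orbitLoop_succ_lt [PseudoMetricSpace α] {δ : ℝ} (hn : 0 < n) (hL : 0 < L)
    (hx : dist (f^[n] x) y < δ) (hy : dist (f^[L] y) x < δ) (k : ℕ) :
    dist (f (orbitLoop f x y n L k)) (orbitLoop f x y n L (k + 1)) < δ := by
  have hδ : 0 < δ := dist_nonneg.trans_lt hx
  have hper := orbitLoop_periodic f x y n L
  wlog hk : k < n + L generalizing k
  · have := this (k % (n + L)) (Nat.mod_lt _ (by omega))
    rwa [hper.map_mod_nat, ← hper.map_mod_nat (k % (n + L) + 1), Nat.mod_add_mod,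
      hper.map_mod_nat] at this
  rcases lt_or_eq_of_le (show k + 1 ≤ n + L by omega) with hk1 | hk1
  · rw [orbitLoop_of_lt _ _ _ _ _ hk, orbitLoop_of_lt _ _ _ _ _ hk1]
    split_ifs with h h'
    · rw [← iterate_succ_apply' f, dist_self]; exact hδ
    · obtain rfl : n = k + 1 := by omega
      rwa [← iterate_succ_apply' f, Nat.sub_self, iterate_zero_apply]
    · omega
    · rw [← iterate_succ_apply' f, show k + 1 - n = (k - n).succ by omega, dist_self]; exact hδ
  · rw [hk1, ← zero_add (n + L), hper, orbitLoop_of_lt _ _ _ _ _ hk,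
      orbitLoop_of_lt _ _ _ _ _ (by omega), if_neg (by omega), if_pos hn, iterate_zero_apply,
      ← iterate_succ_apply' f, show (k - n).succ = L by omega]
    exact hy

end OrbitLoop

theorem sum_range_le_of_shadowed {X : Type*} [PseudoMetricSpace X] {f : X → X} {g : X → ℝ}
    {ε η c : ℝ} (hg : ∀ ⦃a b : X⦄, dist a b < ε → dist (g a) (g b) < η)
    {u : ℕ → X} {P : ℕ} (hu : Periodic u P) {z : X} {π : ℕ} (hπ : 0 < π)
    (hz : IsPeriodicPt f π z) (hc : birkhoffSum f g π z ≤ π * c)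
    (hshadow : ∀ t : ℕ, dist (f^[t] z) (u t) < ε) :
    ∑ t ∈ range P, g (u t) ≤ P * (c + η) := by
  have horbit : Periodic (fun t => g (f^[t] z)) π := fun t => by
    simp only [iterate_add_apply, hz.eq]
  have hclose : ∀ t ∈ range (π * P), g (u t) ≤ g (f^[t] z) + η := fun t _ => by
    have := hg (hshadow t)
    rw [Real.dist_eq] at this
    linarith [(abs_lt.mp this).1]
  -- Compare over `π * P` steps, a common period of the loop and of the orbit of `z`.
  have hmul : (π : ℝ) * ∑ t ∈ range P, g (u t) ≤ π * (P * (c + η)) := calc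
    (π : ℝ) * ∑ t ∈ range P, g (u t) = ∑ t ∈ range (π * P), g (u t) := by
        rw [← nsmul_eq_mul]; exact ((hu.comp g).sum_range_mul π).symm
    _ ≤ ∑ t ∈ range (π * P), (g (f^[t] z) + η) := sum_le_sum hclose
    _ = P * birkhoffSum f g π z + π * P * η := by
        rw [sum_add_distrib, mul_comm π P, horbit.sum_range_mul, birkhoffSum]
        simp only [nsmul_eq_mul, sum_const, card_range, Nat.cast_mul]
        ring
    _ ≤ P * (π * c) + π * P * η := by gcongr
    _ = π * (P * (c + η)) := by ring
  exact le_of_mul_le_mul_left hmul (by exact_mod_cast hπ)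

theorem exists_birkhoffSum_le_of_periodic_bound {X : Type*} [MetricSpace X] [CompactSpace X]
    {f : X ≃ₜ X} (hf : HasPeriodicShadowing f)
    (hnet : ∀ δ : ℝ, 0 < δ → ∃ q : X, (∃ m : ℕ, 1 ≤ m ∧ f^[m] q = q) ∧
      ∀ x : X, ∃ i : ℤ, dist x ((f.toEquiv ^ i) q) < δ)
    {g : X → ℝ} (hg : Continuous g) {c θ : ℝ} (hcθ : c < θ)
    (hper : ∀ z : X, (∃ m : ℕ, 1 ≤ m ∧ f^[m] z = z) →
      birkhoffSum f g (minimalPeriod f z) z ≤ minimalPeriod f z * c) :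
    ∃ C : ℝ, ∀ (x : X) (n : ℕ), 0 < n → birkhoffSum f g n x ≤ C + n * θ := by
  obtain ⟨b, hb⟩ := isCompact_univ.bddBelow_image hg.continuousOn
  obtain ⟨ε, hε, hgε⟩ := Metric.uniformContinuous_iff.mp
    (CompactSpace.uniformContinuous_of_continuous hg) (θ - c) (sub_pos.2 hcθ)
  obtain ⟨δ, hδ, hshadow⟩ := hf.exists_shadow_of_periodic_nat hε
  obtain ⟨q, ⟨m, hm, hq⟩, hqnet⟩ := hnet δ hδ
  refine ⟨m * |θ - b|, fun x n hn => ?_⟩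
  obtain ⟨L₀, -, -, hL₀⟩ := exists_iterate_dist_lt_of_orbit_net hm hq hqnet 0 (f^[n] x)
  obtain ⟨L, hL, hLm, hLx⟩ := exists_iterate_dist_lt_of_orbit_net hm hq hqnet L₀ x
  set y := f^[L₀] q
  obtain ⟨z, ⟨p, hp, hzp⟩, hz⟩ := hshadow (orbitLoop f x y n L) (n + L) (by omega)
    (orbitLoop_periodic _ _ _ _ _) (dist_orbitLoop_succ_lt hn hL (by rwa [dist_comm]) hLx)
  have hloop := sum_range_le_of_shadowed hgε (orbitLoop_periodic _ _ _ _ _)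
    (IsPeriodicPt.minimalPeriod_pos hp hzp) (isPeriodicPt_minimalPeriod f z)
    (hper z ⟨p, hp, hzp⟩) hz
  have hy : L * b ≤ birkhoffSum f g L y := by
    simpa [birkhoffSum] using
      card_nsmul_le_sum (range L) (fun k => g (f^[k] y)) b fun k _ => hb ⟨_, trivial, rfl⟩
  have hLb : (L : ℝ) * (θ - b) ≤ m * |θ - b| :=
    (mul_le_mul_of_nonneg_left (le_abs_self _) (Nat.cast_nonneg _)).trans
      (mul_le_mul_of_nonneg_right (by exact_mod_cast hLm) (abs_nonneg _))
  rw [sum_range_orbitLoop, add_sub_cancel, Nat.cast_add] at hloop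
  linarith

theorem uniform_hyperbolicity_of_periodic_data_general {X : Type*} [MetricSpace X]
    [CompactSpace X] (f : X ≃ₜ X) (lam : ℝ) (h0 : 0 < lam) (h1 : lam < 1) (N : ℕ)
    (φ ψ : X → ℝ) (hφ : Continuous φ) (hψ : Continuous ψ)
    (P2 : ∀ q : X, N < Function.minimalPeriod (⇑f) q →
      (∑ i ∈ Finset.range (Function.minimalPeriod (⇑f) q), φ ((⇑f)^[i] q) <
        (Function.minimalPeriod (⇑f) q) * Real.log lam) ∧
      (∑ i ∈ Finset.range (Function.minimalPeriod (⇑f) q), ψ ((⇑f)^[i] q) <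
        (Function.minimalPeriod (⇑f) q) * Real.log lam))
    (P3 : HasPeriodicShadowing f)
    (P4 : ∀ δ : ℝ, 0 < δ → ∃ q : X, (∃ m : ℕ, 1 ≤ m ∧ (⇑f)^[m] q = q) ∧
      ∀ x : X, ∃ i : ℤ, dist x ((f.toEquiv ^ i) q) < δ)
    (P5 : ∀ q : X, (∃ m : ℕ, 1 ≤ m ∧ (⇑f)^[m] q = q) →
      N < Function.minimalPeriod (⇑f) q) :
    ∃ C : ℝ, ∃ θ : ℝ, θ < 0 ∧ ∀ x : X, ∀ n : ℕ, 1 ≤ n →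
      (∑ i ∈ Finset.range n, φ ((⇑f)^[i] x) ≤ C + n * θ) ∧
      (∑ i ∈ Finset.range n, ψ ((⇑f.symm)^[i] x) ≤ C + n * θ) := by
  have hlog : Real.log lam < 0 := Real.log_neg h0 h1
  have hθ : Real.log lam < Real.log lam / 2 := by linarith
  obtain ⟨Cφ, hCφ⟩ := exists_birkhoffSum_le_of_periodic_bound P3 P4 hφ hθ fun z hz =>
    (P2 z (P5 z hz)).1.le
  obtain ⟨Cψ, hCψ⟩ := exists_birkhoffSum_le_of_periodic_bound P3 P4 hψ hθ fun z hz =>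
    (P2 z (P5 z hz)).2.le
  refine ⟨max Cφ Cψ, Real.log lam / 2, by linarith, fun x n hn => ⟨?_, ?_⟩⟩
  · exact (hCφ x n hn).trans (by gcongr; exact le_max_left _ _)
  · rw [LeftInverse.sum_range_iterate_eq_birkhoffSum f.apply_symm_apply]
    exact (hCψ _ n hn).trans (by gcongr; exact le_max_right _ _)

/-- The abstract form of Proposition 4.1: domination (P1), uniform contraction/expansion
at the period for periodic points of large minimal period (P2), periodic shadowing (P3),
periodic orbits forming `δ`-nets (P4) and absence of periodic points of small minimal
period (P5) imply uniform contraction of `φ`-sums along forward orbits and of `ψ`-sums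
along backward orbits. -/
theorem uniform_hyperbolicity_of_periodic_data {X : Type*} [MetricSpace X]
    [CompactSpace X] (f : X ≃ₜ X) (lam : ℝ) (h0 : 0 < lam) (h1 : lam < 1) (N : ℕ)
    (φ ψ : X → ℝ) (hφ : Continuous φ) (hψ : Continuous ψ)
    (P1 : ∀ x : X, φ x + ψ (f x) < 2 * Real.log lam)
    (P2 : ∀ q : X, N < Function.minimalPeriod (⇑f) q →
      (∑ i ∈ Finset.range (Function.minimalPeriod (⇑f) q), φ ((⇑f)^[i] q) <
        (Function.minimalPeriod (⇑f) q) * Real.log lam) ∧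
      (∑ i ∈ Finset.range (Function.minimalPeriod (⇑f) q), ψ ((⇑f)^[i] q) <
        (Function.minimalPeriod (⇑f) q) * Real.log lam))
    (P3 : HasPeriodicShadowing f)
    (P4 : ∀ δ : ℝ, 0 < δ → ∃ q : X, (∃ m : ℕ, 1 ≤ m ∧ (⇑f)^[m] q = q) ∧
      ∀ x : X, ∃ i : ℤ, dist x ((f.toEquiv ^ i) q) < δ)
    (P5 : ∀ q : X, (∃ m : ℕ, 1 ≤ m ∧ (⇑f)^[m] q = q) →
      N < Function.minimalPeriod (⇑f) q) :
    ∃ C : ℝ, ∃ θ : ℝ, θ < 0 ∧ ∀ x : X, ∀ n : ℕ, 1 ≤ n →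
      (∑ i ∈ Finset.range n, φ ((⇑f)^[i] x) ≤ C + n * θ) ∧
      (∑ i ∈ Finset.range n, ψ ((⇑f.symm)^[i] x) ≤ C + n * θ) :=
  uniform_hyperbolicity_of_periodic_data_general f lam h0 h1 N φ ψ hφ hψ P2 P3 P4 P5
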